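/- Consider running the student-proposing DA algorithm in stages according to a tier structure on reshuffled (tier-aligned) preferences: in stage k, only students unmatched after stage k−1 propose, and only to tier-k schools, in their preference order. This staged procedure produces exactly the same matching as the standard student-proposing DA algorithm run on the full reshuffled preferences. -/
import Mathlib


set_option linter.unusedSectionVars false

namespace SchoolChoice

/-- A strict preference over `S ∪ {self}`, encoded by an injective ranking function on
`Option S`; `none` denotes being unmatched (the student himself), and a smaller rank
means more preferred. Injective rankings on a finite set are exactly strict linear orders. -/
structure Pref (S : Type) where
  rank : Option S → ℕ
  inj : Function.Injective rank

/-- Quotas together with strict priorities of the schools: `prank s` ranks the students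
at school `s`, a smaller rank meaning higher priority. -/
structure Prio (I S : Type) where
  quota : S → ℕ
  prank : S → I → ℕ
  inj : ∀ s, Function.Injective (prank s)

variable {I S : Type} [Fintype I] [Fintype S] [DecidableEq I] [DecidableEq S]

/-- `i` has strictly higher priority than `j` at school `s`. -/
def Prio.higher (E : Prio I S) (s : S) (i j : I) : Prop :=
  E.prank s i < E.prank s j

/-- A matching assigns to each student a school or himself (`none`). -/
abbrev Matching (I S : Type) := I → Option S

/-- The set of students assigned to school `s`. -/
def assigned (μ : Matching I S) (s : S) : Finset I :=
  Finset.univ.filter (fun i => μ i = some s)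

/-- Quotas are respected. -/
def Feasible (E : Prio I S) (μ : Matching I S) : Prop :=
  ∀ s, (assigned μ s).card ≤ E.quota s

/-- `(i, s)` is a blocking pair of `μ` with respect to preferences `R`:
`i` strictly prefers `s` to his assignment, and either `s` has an empty seat
(wastefulness) or some student assigned to `s` has lower priority than `i`
(justified envy). -/
def Blocks (E : Prio I S) (R : I → Pref S) (μ : Matching I S) (i : I) (s : S) : Prop :=
  (R i).rank (some s) < (R i).rank (μ i) ∧
    ((assigned μ s).card < E.quota s ∨ ∃ j, μ j = some s ∧ E.higher s i j)

/-- Individual rationality: every student weakly prefers his assignment to being unmatched. -/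
def IndivRat (R : I → Pref S) (μ : Matching I S) : Prop :=
  ∀ i, (R i).rank (μ i) ≤ (R i).rank none

/-- Non-wastefulness: no student prefers a school with an empty seat to his assignment. -/
def NonWasteful (E : Prio I S) (R : I → Pref S) (μ : Matching I S) : Prop :=
  ∀ i s, (R i).rank (some s) < (R i).rank (μ i) → E.quota s ≤ (assigned μ s).card

/-- Stability: feasible, individually rational, and no blocking pair
(no justified envy and non-wasteful). -/
def Stable (E : Prio I S) (R : I → Pref S) (μ : Matching I S) : Prop :=
  Feasible E μ ∧ IndivRat R μ ∧ ∀ i s, ¬ Blocks E R μ i s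

/-- The student-optimal stable matching for the (reported) preferences. -/
def StudentOptimal (E : Prio I S) (R : I → Pref S) (μ : Matching I S) : Prop :=
  Stable E R μ ∧ ∀ ν, Stable E R ν → ∀ i, (R i).rank (μ i) ≤ (R i).rank (ν i)

open Classical in
/-- The student-proposing deferred acceptance mechanism: by the Gale–Shapley theorem its
outcome is the (unique) student-optimal stable matching of the reported preferences. -/
noncomputable def DA (E : Prio I S) (R : I → Pref S) : Matching I S :=
  if h : ∃ μ, StudentOptimal E R μ then h.choose else fun _ => none

/-- A strict upper bound for the values of a ranking. -/
noncomputable def bnd (p : Pref S) : ℕ := (Finset.univ.sup p.rank) + 1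

lemma rank_lt_bnd (p : Pref S) (x : Option S) : p.rank x < bnd p :=
  Nat.lt_succ_of_le (Finset.le_sup (Finset.mem_univ x))

private lemma mul_add_lt {a K B r : ℕ} (ha : a ≤ K) (hr : r < B) :
    a * B + r < (K + 1) * B := by
  calc a * B + r < a * B + B := by omega
    _ = (a + 1) * B := by ring
    _ ≤ (K + 1) * B := Nat.mul_le_mul (by omega) le_rfl

/-- Is an alternative "inside the market" `A`?  `none` always is. -/
def goodB (A : S → Prop) [DecidablePred A] : Option S → Bool
  | none => true
  | some s => decide (A s)

/-- The preference truncated to the set of schools `A`: schools in `A` (and the outside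
option `none`) keep their relative order, while all schools outside `A` are pushed below
`none` (become unacceptable), keeping their relative order among themselves. -/
noncomputable def trunc (A : S → Prop) [DecidablePred A] (p : Pref S) : Pref S where
  rank x := (if goodB A x then 0 else bnd p) + p.rank x
  inj := by
    intro x y h
    by_cases hx : goodB A x <;> by_cases hy : goodB A y <;>
      simp only [hx, hy, if_true, if_false, Bool.false_eq_true, zero_add] at h
    · exact p.inj h
    · have := rank_lt_bnd p x; omega
    · have := rank_lt_bnd p y; omega
    · exact p.inj (by omega)

/-- The reshuffled preference with respect to a tier structure `t`: acceptable schools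
are grouped by tier in increasing tier order (keeping the original relative order within
each tier) above `none`, and all unacceptable schools are placed below `none`. -/
noncomputable def reshuffle (t : S → ℕ) (p : Pref S) : Pref S where
  rank x :=
    Option.elim x ((Finset.univ.sup t + 1) * bnd p)
      (fun s =>
        if p.rank (some s) < p.rank none then t s * bnd p + p.rank (some s)
        else (Finset.univ.sup t + 1) * bnd p + 1 + p.rank (some s))
  inj := by
    have hB : ∀ x, p.rank x < bnd p := rank_lt_bnd p
    have hK : ∀ s : S, t s ≤ Finset.univ.sup t := fun s => Finset.le_sup (Finset.mem_univ s)
    intro x y h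
    rcases x with _ | s <;> rcases y with _ | s' <;>
      simp only [Option.elim_none, Option.elim_some] at h
    · rfl
    · by_cases hy : p.rank (some s') < p.rank none <;> simp only [hy, if_true, if_false] at h
      · have := mul_add_lt (hK s') (hB (some s')); omega
      · omega
    · by_cases hx : p.rank (some s) < p.rank none <;> simp only [hx, if_true, if_false] at h
      · have := mul_add_lt (hK s) (hB (some s)); omega
      · omega
    · by_cases hx : p.rank (some s) < p.rank none <;>
        by_cases hy : p.rank (some s') < p.rank none <;>
        simp only [hx, hy, if_true, if_false] at h
      · have hts : t s = t s' := by
          rcases Nat.lt_trichotomy (t s) (t s') with h1 | h1 | h1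
          · have h2 : t s * bnd p + p.rank (some s) < t s' * bnd p + p.rank (some s') := by
              have h3 := mul_add_lt (a := t s) (K := t s' - 1) (B := bnd p) (by omega) (hB (some s))
              have h4 : (t s' - 1 + 1) * bnd p = t s' * bnd p := by congr 1; omega
              omega
            omega
          · exact h1
          · have h2 : t s' * bnd p + p.rank (some s') < t s * bnd p + p.rank (some s) := by
              have h3 := mul_add_lt (a := t s') (K := t s - 1) (B := bnd p) (by omega) (hB (some s'))
              have h4 : (t s - 1 + 1) * bnd p = t s * bnd p := by congr 1; omega
              omega
            omega
        rw [hts] at h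
        exact p.inj (by omega)
      · have := mul_add_lt (hK s) (hB (some s)); omega
      · have := mul_add_lt (hK s') (hB (some s')); omega
      · exact p.inj (by omega)

/-- A tier structure assigning each school a tier in `{1, …, T}`, each tier nonempty. -/
def IsTierStructure (t : S → ℕ) (T : ℕ) : Prop :=
  (∀ s, 1 ≤ t s ∧ t s ≤ T) ∧ ∀ k, 1 ≤ k → k ≤ T → ∃ s, t s = k

/-- Rounds `1, …, k` of the tiered deferred acceptance mechanism: in round `k` the
students left unmatched so far participate in the DA mechanism with their preferences
truncated to the tier-`k` schools (already matched students participate with nothing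
acceptable); students matched in earlier rounds keep their assignments. -/
noncomputable def TDAaux (E : Prio I S) (t : S → ℕ) (Q : I → Pref S) : ℕ → Matching I S
  | 0 => fun _ => none
  | k + 1 => fun i =>
      match TDAaux E t Q k i with
      | some s => some s
      | none =>
          DA E (fun j =>
            if TDAaux E t Q k j = none then trunc (fun s => t s = k + 1) (Q j)
            else trunc (fun _ => False) (Q j)) i

/-- The tiered deferred acceptance mechanism under tier structure `t`. -/
noncomputable def TDA (E : Prio I S) (t : S → ℕ) (Q : I → Pref S) : Matching I S :=
  TDAaux E t Q (Finset.univ.sup t)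

/-- `Q` is a (pure) Nash equilibrium of the preference revelation game induced by the
mechanism `f` when the true preferences are `R`: no student can obtain a school he truly
strictly prefers by unilaterally changing his report. -/
def NashEq (R : I → Pref S) (f : (I → Pref S) → Matching I S) (Q : I → Pref S) : Prop :=
  ∀ (i : I) (Qi' : Pref S),
    (R i).rank (f Q i) ≤ (R i).rank (f (Function.update Q i Qi') i)

/-- `μ` is a Nash equilibrium outcome of the revelation game induced by `f` at true
preferences `R`. -/
def NashOutcome (R : I → Pref S) (f : (I → Pref S) → Matching I S) (μ : Matching I S) : Prop :=
  ∃ Q, NashEq R f Q ∧ f Q = μ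

/-- The preference `p` is aligned with the tier structure `t`: a (weakly) more preferred
school always lies in a weakly earlier tier. -/
def AlignedPref (t : S → ℕ) (p : Pref S) : Prop :=
  ∀ s s' : S, p.rank (some s) ≤ p.rank (some s') → t s ≤ t s'

/-- `p` lists exactly the school in `o` (if any) as acceptable. -/
def OnlyAcceptable (p : Pref S) (o : Option S) : Prop :=
  ∀ s : S, (p.rank (some s) < p.rank none ↔ o = some s)

/-- An Ergin cycle of the priority structure among the schools in `A`. -/
def Cycle (E : Prio I S) (A : S → Prop) : Prop :=
  ∃ a b : S, A a ∧ A b ∧ a ≠ b ∧ ∃ i j k : I,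
    E.higher a i j ∧ E.higher a j k ∧ E.higher b k i ∧
    ∃ Ia Ib : Finset I, Disjoint Ia Ib ∧
      (∀ l ∈ Ia, l ≠ i ∧ l ≠ j ∧ l ≠ k ∧ E.higher a l j) ∧
      (∀ l ∈ Ib, l ≠ i ∧ l ≠ j ∧ l ≠ k ∧ E.higher b l i) ∧
      Ia.card = E.quota a - 1 ∧ Ib.card = E.quota b - 1

/-- Within-tier acyclicity of a generalized priority structure: no Ergin cycle among the
schools of any single tier. -/
def WithinTierAcyclic (E : Prio I S) (t : S → ℕ) : Prop :=
  ∀ k : ℕ, ¬ Cycle E (fun s => t s = k)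

/-- The (strict) preference `pr` of school `s` over sets of students is a responsive
extension of its priorities. -/
def Responsive (E : Prio I S) (s : S) (pr : Finset I → Finset I → Prop) : Prop :=
  ∀ (J : Finset I) (i j : I), i ∉ J → j ∉ J → E.higher s i j →
    pr (insert i J) (insert j J)

/-- `t` is a refinement of `t'`: `t'` ranks `a` in a strictly later tier than `b` only
if `t` does. -/
def Refines (t t' : S → ℕ) : Prop :=
  ∀ a b : S, t' b < t' a → t b < t a

open Classical

section GS
variable (E : Prio I S) (R : I → Pref S)

/-- The most preferred option among those not yet rejected (`none` is always available). -/
noncomputable def best (p : Pref S) (D : Finset S) : Option S :=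
  (Finset.exists_min_image (insert none ((Finset.univ \ D).image some)) p.rank
    ⟨none, Finset.mem_insert_self _ _⟩).choose

lemma best_spec (p : Pref S) (D : Finset S) :
    best p D ∈ insert none ((Finset.univ \ D).image some) ∧
      ∀ x ∈ insert none ((Finset.univ \ D).image some), p.rank (best p D) ≤ p.rank x := by
  have h := (Finset.exists_min_image (insert none ((Finset.univ \ D).image some)) p.rank
    ⟨none, Finset.mem_insert_self _ _⟩).choose_spec
  exact ⟨h.1, h.2⟩

lemma best_struct (p : Pref S) (D : Finset S) :
    best p D = none ∨ ∃ s, best p D = some s ∧ s ∉ D := by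
  have h := (best_spec p D).1
  rcases Finset.mem_insert.1 h with h | h
  · exact Or.inl h
  · rcases Finset.mem_image.1 h with ⟨s, hs, hes⟩
    exact Or.inr ⟨s, hes.symm, (Finset.mem_sdiff.1 hs).2⟩

lemma best_le_none (p : Pref S) (D : Finset S) : p.rank (best p D) ≤ p.rank none :=
  (best_spec p D).2 none (Finset.mem_insert_self _ _)

lemma best_le (p : Pref S) {D : Finset S} {s : S} (h : s ∉ D) :
    p.rank (best p D) ≤ p.rank (some s) :=
  (best_spec p D).2 (some s) (Finset.mem_insert_of_mem
    (Finset.mem_image_of_mem some (Finset.mem_sdiff.2 ⟨Finset.mem_univ s, h⟩)))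

lemma best_notin {p : Pref S} {D : Finset S} {s : S} (h : best p D = some s) : s ∉ D := by
  rcases best_struct p D with h' | ⟨s', h', hs'⟩
  · rw [h] at h'; exact absurd h' (by simp)
  · rw [h] at h'; obtain rfl : s' = s := by injection h'.symm
    exact hs'

/-- Current demanders of school `s`. -/
noncomputable def dem (D : I → Finset S) (s : S) : Finset I :=
  Finset.univ.filter (fun j => best (R j) (D j) = some s)

/-- The Gale–Shapley invariants: a rejected school never hosts the student in any stable
matching, and a school that has rejected somebody has a full quota of higher-priority
demanders. -/
def GoodInv (D : I → Finset S) : Prop :=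
  (∀ i s, s ∈ D i → ∀ ν, Stable E R ν → ν i ≠ some s) ∧
  (∀ i s, s ∈ D i →
    E.quota s ≤ ((dem R D s).filter (fun j => E.higher s j i)).card)

lemma terminal_SO (D : I → Finset S) (hG : GoodInv E R D)
    (hterm : ∀ s, (dem R D s).card ≤ E.quota s) :
    StudentOptimal E R (fun i => best (R i) (D i)) := by
  set μ : Matching I S := fun i => best (R i) (D i) with hμ
  have hass : ∀ s, assigned μ s = dem R D s := fun s => rfl
  have hstable : Stable E R μ := by
    refine ⟨fun s => by rw [hass]; exact hterm s, fun i => best_le_none _ _, ?_⟩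
    rintro i s ⟨h1, h2⟩
    have hsD : s ∈ D i := by
      by_contra hsD
      exact absurd h1 (not_lt.2 (best_le (R i) hsD))
    have hq := hG.2 i s hsD
    have hsub : (dem R D s).filter (fun j => E.higher s j i) = dem R D s := by
      apply Finset.eq_of_subset_of_card_le (Finset.filter_subset _ _)
      exact le_trans (hterm s) hq
    rcases h2 with h2 | ⟨j, hj, hij⟩
    · rw [hass] at h2
      exact absurd h2 (not_lt.2 (le_trans hq (Finset.card_le_card (Finset.filter_subset _ _))))
    · have hjmem : j ∈ dem R D s := Finset.mem_filter.2 ⟨Finset.mem_univ j, hj⟩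
      rw [← hsub] at hjmem
      exact absurd hij (lt_asymm (Finset.mem_filter.1 hjmem).2)
  refine ⟨hstable, fun ν hν i => ?_⟩
  rcases hn : ν i with _ | s
  · exact best_le_none _ _
  · have hsD : s ∉ D i := fun h => hG.1 i s h ν hν hn
    exact best_le (R i) hsD
end GS
section GS2
variable (E : Prio I S) (R : I → Pref S)

lemma step_good {D : I → Finset S} (hG : GoodInv E R D) {s : S}
    (hs : E.quota s < (dem R D s).card) :
    ∃ i, best (R i) (D i) = some s ∧
      GoodInv E R (Function.update D i (insert s (D i))) := by
  have hne : (dem R D s).Nonempty := Finset.card_pos.1 (lt_of_le_of_lt (Nat.zero_le _) hs)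
  obtain ⟨i, hi, hmax⟩ := Finset.exists_max_image (dem R D s) (E.prank s) hne
  have hbi : best (R i) (D i) = some s := (Finset.mem_filter.1 hi).2
  set D' := Function.update D i (insert s (D i)) with hD'
  have hDj : ∀ j, j ≠ i → D' j = D j := fun j hj => Function.update_of_ne hj _ _
  have hbj : ∀ j, j ≠ i → best (R j) (D' j) = best (R j) (D j) := fun j hj => by rw [hDj j hj]
  have hDi : D' i = insert s (D i) := Function.update_self _ _ _
  have hbinew : best (R i) (D' i) ≠ some s := by
    intro h
    exact best_notin h (by rw [hDi]; exact Finset.mem_insert_self _ _)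
  -- all other demanders of s have strictly higher priority than i
  have hhigher : ∀ j ∈ dem R D s, j ≠ i → E.higher s j i := by
    intro j hj hji
    have := hmax j hj
    have hne' : E.prank s j ≠ E.prank s i := fun h => hji (E.inj s h)
    exact lt_of_le_of_ne this hne'
  -- demand set at s after the rejection
  have hdems : dem R D' s = (dem R D s).erase i := by
    ext j
    simp only [dem, Finset.mem_filter, Finset.mem_univ, true_and, Finset.mem_erase]
    constructor
    · intro h
      have hji : j ≠ i := by rintro rfl; exact hbinew h
      rw [hbj j hji] at h; exact ⟨hji, h⟩
    · rintro ⟨hji, h⟩; rw [hbj j hji]; exact h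
  -- demand sets elsewhere only grow
  have hdem' : ∀ s', s' ≠ s → dem R D s' ⊆ dem R D' s' := by
    intro s' hs' j hj
    have hj' := (Finset.mem_filter.1 hj).2
    have hji : j ≠ i := by
      rintro rfl; rw [hbi] at hj'; exact hs' (Option.some.inj hj').symm
    exact Finset.mem_filter.2 ⟨Finset.mem_univ j, by rw [hbj j hji]; exact hj'⟩
  refine ⟨i, hbi, ?_, ?_⟩
  · -- G1
    intro i₀ s₀ hmem ν hν hνi
    rw [← hD'] at hmem
    by_cases hii : i₀ = i
    · subst hii
      rw [hDi, Finset.mem_insert] at hmem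
      rcases hmem with rfl | hmem
      · -- the fresh rejection: the crux
        have hA : ∀ j ∈ (dem R D s₀).erase i₀, ν j = some s₀ := by
          intro j hj
          obtain ⟨hji, hjdem⟩ := Finset.mem_erase.1 hj
          by_contra hnj
          have hbj' : best (R j) (D j) = some s₀ := (Finset.mem_filter.1 hjdem).2
          have havail : (R j).rank (best (R j) (D j)) ≤ (R j).rank (ν j) := by
            rcases hne2 : ν j with _ | s''
            · exact best_le_none _ _
            · exact best_le (R j) (fun hmem' => hG.1 j s'' hmem' ν hν hne2)
          have hstrict : (R j).rank (some s₀) < (R j).rank (ν j) := by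
            rw [← hbj']
            exact lt_of_le_of_ne havail (fun h => hnj (by rw [← hbj', (R j).inj h]))
          exact hν.2.2 j s₀ ⟨hstrict, Or.inr ⟨i₀, hνi, hhigher j hjdem hji⟩⟩
        have hsub : insert i₀ ((dem R D s₀).erase i₀) ⊆ assigned ν s₀ := by
          intro j hj
          rcases Finset.mem_insert.1 hj with rfl | hj
          · exact Finset.mem_filter.2 ⟨Finset.mem_univ _, hνi⟩
          · exact Finset.mem_filter.2 ⟨Finset.mem_univ _, hA j hj⟩
        have hcard : (dem R D s₀).card ≤ (assigned ν s₀).card := by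
          calc (dem R D s₀).card = ((dem R D s₀).erase i₀).card + 1 := by
                rw [Finset.card_erase_of_mem hi]
                have : 1 ≤ (dem R D s₀).card := Finset.card_pos.2 ⟨i₀, hi⟩
                omega
            _ = (insert i₀ ((dem R D s₀).erase i₀)).card := by
                rw [Finset.card_insert_of_notMem (Finset.notMem_erase _ _)]
            _ ≤ _ := Finset.card_le_card hsub
        exact absurd (hν.1 s₀) (not_le.2 (lt_of_lt_of_le hs hcard))
      · exact hG.1 i₀ s₀ hmem ν hν hνi
    · exact hG.1 i₀ s₀ (by rwa [hDj i₀ hii] at hmem) ν hν hνi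
  · -- G2
    intro i₀ s₀ hmem
    rw [← hD'] at hmem
    by_cases hss : s₀ = s
    · subst hss
      rw [hdems]
      by_cases hii : i₀ = i
      · subst hii
        have hfe : ((dem R D s₀).erase i₀).filter (fun j => E.higher s₀ j i₀)
            = (dem R D s₀).erase i₀ := by
          apply Finset.filter_true_of_mem
          intro j hj
          obtain ⟨hji, hjdem⟩ := Finset.mem_erase.1 hj
          exact hhigher j hjdem hji
        rw [hfe, Finset.card_erase_of_mem hi]
        omega
      · have hmem' : s₀ ∈ D i₀ := by rwa [hDj i₀ hii] at hmem
        have hold := hG.2 i₀ s₀ hmem'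
        by_cases hhi : E.higher s₀ i i₀
        · have hfe : (Finset.filter (fun j => E.higher s₀ j i₀) ((dem R D s₀).erase i))
              = (dem R D s₀).erase i := by
            apply Finset.filter_true_of_mem
            intro j hj
            exact lt_of_le_of_lt (hmax j (Finset.mem_erase.1 hj).2) hhi
          rw [hfe, Finset.card_erase_of_mem hi]
          omega
        · have hsub : (dem R D s₀).filter (fun j => E.higher s₀ j i₀)
              ⊆ ((dem R D s₀).erase i).filter (fun j => E.higher s₀ j i₀) := by
            intro j hj
            obtain ⟨hjd, hjh⟩ := Finset.mem_filter.1 hj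
            refine Finset.mem_filter.2 ⟨Finset.mem_erase.2 ⟨?_, hjd⟩, hjh⟩
            rintro rfl; exact hhi hjh
          exact le_trans hold (Finset.card_le_card hsub)
    · have hmem' : s₀ ∈ D i₀ := by
        by_cases hii : i₀ = i
        · subst hii; rw [hDi, Finset.mem_insert] at hmem
          rcases hmem with rfl | hmem
          · exact absurd rfl hss
          · exact hmem
        · rwa [hDj i₀ hii] at hmem
      have hold := hG.2 i₀ s₀ hmem'
      refine le_trans hold (Finset.card_le_card ?_)
      exact Finset.filter_subset_filter _ (hdem' s₀ hss)
end GS2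
section GS3
variable (E : Prio I S) (R : I → Pref S)

lemma exists_SO_aux : ∀ (n : ℕ) (D : I → Finset S),
    (∑ i, ((Finset.univ : Finset S) \ D i).card) ≤ n → GoodInv E R D →
    ∃ μ, StudentOptimal E R μ := by
  intro n
  induction n with
  | zero =>
      intro D hn hG
      by_cases hterm : ∀ s, (dem R D s).card ≤ E.quota s
      · exact ⟨_, terminal_SO E R D hG hterm⟩
      · push_neg at hterm
        obtain ⟨s, hs⟩ := hterm
        obtain ⟨j, hj⟩ := Finset.card_pos.1 (lt_of_le_of_lt (Nat.zero_le _) hs)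
        have hbj : best (R j) (D j) = some s := (Finset.mem_filter.1 hj).2
        have hsD : s ∉ D j := best_notin hbj
        have h1 : 1 ≤ ((Finset.univ : Finset S) \ D j).card :=
          Finset.card_pos.2 ⟨s, Finset.mem_sdiff.2 ⟨Finset.mem_univ s, hsD⟩⟩
        have h2 : ((Finset.univ : Finset S) \ D j).card ≤ ∑ i, ((Finset.univ : Finset S) \ D i).card :=
          Finset.single_le_sum (f := fun i => ((Finset.univ : Finset S) \ D i).card)
            (fun i _ => Nat.zero_le _) (Finset.mem_univ j)
        omega
  | succ n ih =>
      intro D hn hG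
      by_cases hterm : ∀ s, (dem R D s).card ≤ E.quota s
      · exact ⟨_, terminal_SO E R D hG hterm⟩
      · push_neg at hterm
        obtain ⟨s, hs⟩ := hterm
        obtain ⟨i, hbi, hG'⟩ := step_good E R hG hs
        apply ih (Function.update D i (insert s (D i))) ?_ hG'
        have hsD : s ∉ D i := best_notin hbi
        have hkey : ((Finset.univ : Finset S) \ insert s (D i)).card
            = ((Finset.univ : Finset S) \ D i).card - 1 := by
          have : (Finset.univ : Finset S) \ insert s (D i) = ((Finset.univ : Finset S) \ D i).erase s := by
            ext x
            simp only [Finset.mem_sdiff, Finset.mem_insert, Finset.mem_erase, Finset.mem_univ,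
              true_and]
            tauto
          rw [this, Finset.card_erase_of_mem (Finset.mem_sdiff.2 ⟨Finset.mem_univ s, hsD⟩)]
        have h1 : 1 ≤ ((Finset.univ : Finset S) \ D i).card :=
          Finset.card_pos.2 ⟨s, Finset.mem_sdiff.2 ⟨Finset.mem_univ s, hsD⟩⟩
        have hsum : ∀ (G : I → Finset S),
            ∑ j, ((Finset.univ : Finset S) \ G j).card
              = ((Finset.univ : Finset S) \ G i).card
                + ∑ j ∈ Finset.univ.erase i, ((Finset.univ : Finset S) \ G j).card := by
          intro G
          exact (Finset.add_sum_erase _ _ (Finset.mem_univ i)).symm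
        have heq : ∑ j ∈ Finset.univ.erase i,
              ((Finset.univ : Finset S) \ Function.update D i (insert s (D i)) j).card
            = ∑ j ∈ Finset.univ.erase i, ((Finset.univ : Finset S) \ D j).card := by
          apply Finset.sum_congr rfl
          intro j hj
          rw [Function.update_of_ne (Finset.mem_erase.1 hj).1]
        rw [hsum, heq, Function.update_self, hkey]
        rw [hsum D] at hn
        omega

lemma exists_studentOptimal : ∃ μ, StudentOptimal E R μ := by
  apply exists_SO_aux E R (∑ i : I, ((Finset.univ : Finset S) \ ∅).card) (fun _ => ∅) le_rfl
  constructor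
  · intro i s hs; exact absurd hs (Finset.notMem_empty s)
  · intro i s hs; exact absurd hs (Finset.notMem_empty s)

lemma studentOptimal_unique {μ ν : Matching I S}
    (h1 : StudentOptimal E R μ) (h2 : StudentOptimal E R ν) : μ = ν := by
  funext i
  exact (R i).inj (le_antisymm (h1.2 ν h2.1 i) (h2.2 μ h1.1 i))

lemma DA_studentOptimal : StudentOptimal E R (DA E R) := by
  have h := exists_studentOptimal E R
  rw [DA, dif_pos h]
  exact h.choose_spec

lemma DA_eq_of_SO {μ : Matching I S} (h : StudentOptimal E R μ) : DA E R = μ :=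
  studentOptimal_unique E R (DA_studentOptimal E R) h
end GS3
section Helpers
variable (E : Prio I S)

lemma trunc_rank_none (A : S → Prop) [DecidablePred A] (p : Pref S) :
    (trunc A p).rank none = p.rank none := by
  simp [trunc, goodB]

lemma trunc_rank_pos {A : S → Prop} [DecidablePred A] (p : Pref S) {s : S} (h : A s) :
    (trunc A p).rank (some s) = p.rank (some s) := by
  simp [trunc, goodB, h]

lemma trunc_rank_neg {A : S → Prop} [DecidablePred A] (p : Pref S) {s : S} (h : ¬ A s) :
    (trunc A p).rank (some s) = bnd p + p.rank (some s) := by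
  simp [trunc, goodB, h]

lemma trunc_rank_good {A : S → Prop} [DecidablePred A] (p : Pref S) {x : Option S}
    (h : x = none ∨ ∃ s, x = some s ∧ A s) : (trunc A p).rank x = p.rank x := by
  rcases h with rfl | ⟨s, rfl, hs⟩
  · exact trunc_rank_none A p
  · exact trunc_rank_pos p hs

lemma IR_struct {A : S → Prop} [DecidablePred A] {p : Pref S} {x : Option S}
    (h : (trunc A p).rank x ≤ (trunc A p).rank none) :
    x = none ∨ ∃ s, x = some s ∧ A s ∧ p.rank (some s) < p.rank none := by
  rcases x with _ | s
  · exact Or.inl rfl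
  · right
    refine ⟨s, rfl, ?_⟩
    rw [trunc_rank_none] at h
    by_cases hA : A s
    · rw [trunc_rank_pos p hA] at h
      refine ⟨hA, lt_of_le_of_ne h (fun he => ?_)⟩
      exact Option.some_ne_none s (p.inj he)
    · rw [trunc_rank_neg p hA] at h
      have := rank_lt_bnd p none
      omega

/-- A preferred alternative must also lie inside the market. -/
lemma block_struct {A : S → Prop} [DecidablePred A] {p : Pref S} {x : Option S} {s : S}
    (hx : (trunc A p).rank x = p.rank x) (hxn : p.rank x ≤ p.rank none)
    (h : (trunc A p).rank (some s) < (trunc A p).rank x) :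
    A s ∧ p.rank (some s) < p.rank x := by
  by_cases hA : A s
  · rw [trunc_rank_pos p hA, hx] at h
    exact ⟨hA, h⟩
  · rw [trunc_rank_neg p hA, hx] at h
    have := rank_lt_bnd p none
    omega

lemma SO_of_rank_eq {R R' : I → Pref S} {μ : Matching I S}
    (h : ∀ i x, (R i).rank x = (R' i).rank x) (hμ : StudentOptimal E R μ) :
    StudentOptimal E R' μ := by
  have hst : ∀ ν, Stable E R ν ↔ Stable E R' ν := by
    intro ν
    unfold Stable IndivRat Blocks
    simp only [h]
  obtain ⟨h1, h2⟩ := hμ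
  refine ⟨(hst μ).1 h1, fun ν hν i => ?_⟩
  rw [← h, ← h]
  exact h2 ν ((hst ν).2 hν) i

lemma card_matched (μ : Matching I S) :
    (Finset.univ.filter (fun i => μ i ≠ none)).card = ∑ s, (assigned μ s).card := by
  rw [← Finset.card_biUnion]
  · congr 1
    ext i
    simp only [Finset.mem_filter, Finset.mem_univ, true_and, Finset.mem_biUnion, assigned]
    rw [Option.ne_none_iff_exists']
  · intro a _ b _ hab
    simp only [Finset.disjoint_left, assigned, Finset.mem_filter]
    rintro i ⟨_, h1⟩ ⟨_, h2⟩
    rw [h1] at h2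
    exact hab (by injection h2)

lemma base_SO (t : S → ℕ) (Q : I → Pref S) (ht1 : ∀ s, 1 ≤ t s) :
    StudentOptimal E (fun i => trunc (fun s => t s ≤ 0) (Q i)) (fun _ => none) := by
  have hbad : ∀ (i : I) (s : S),
      (trunc (fun s => t s ≤ 0) (Q i)).rank none
        < (trunc (fun s => t s ≤ 0) (Q i)).rank (some s) := by
    intro i s
    rw [trunc_rank_none, trunc_rank_neg (Q i) (by have := ht1 s; omega)]
    have := rank_lt_bnd (Q i) none
    omega
  constructor
  · refine ⟨fun s => ?_, fun i => le_rfl, ?_⟩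
    · have : assigned (fun _ => none : Matching I S) s = ∅ := by
        ext i; simp [assigned]
      rw [this]; simp
    · rintro i s ⟨h1, _⟩
      exact absurd h1 (not_lt.2 (le_of_lt (hbad i s)))
  · intro ν hν i
    rcases hn : ν i with _ | s
    · exact le_rfl
    · exact le_of_lt (hbad i s)
end Helpers
section Step
variable (E : Prio I S)

lemma step_SO (t : S → ℕ) (Q : I → Pref S)
    (hA : ∀ i, AlignedPref t (Q i)) (k : ℕ) (ρ : Matching I S)
    (hρ : StudentOptimal E (fun i => trunc (fun s => t s ≤ k) (Q i)) ρ) :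
    StudentOptimal E (fun i => trunc (fun s => t s ≤ k + 1) (Q i))
      (fun i =>
        match ρ i with
        | some s => some s
        | none =>
            DA E (fun j => if ρ j = none then trunc (fun s => t s = k + 1) (Q j)
              else trunc (fun _ => False) (Q j)) i) := by
  set R' : I → Pref S := fun j => if ρ j = none then trunc (fun s => t s = k + 1) (Q j)
      else trunc (fun _ => False) (Q j) with hR'
  set d : Matching I S := DA E R' with hdd
  have hd : StudentOptimal E R' d := DA_studentOptimal E R'
  set σ : Matching I S := fun i =>
    match ρ i with
    | some s => some s
    | none => d i with hσ
  have hR'1 : ∀ j, ρ j = none → R' j = trunc (fun s => t s = k + 1) (Q j) := by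
    intro j hj; rw [hR']; simp only [hj, if_pos]
  have hR'2 : ∀ j, ρ j ≠ none → R' j = trunc (fun _ : S => False) (Q j) := by
    intro j hj; simp only [hR']; rw [if_neg hj]
  have hσ1 : ∀ i s, ρ i = some s → σ i = some s := by
    intro i s h; simp only [hσ, h]
  have hσ2 : ∀ i, ρ i = none → σ i = d i := by
    intro i h; simp only [hσ, h]
  -- structure of ρ
  have ρS : ∀ i, ρ i = none ∨
      ∃ s, ρ i = some s ∧ t s ≤ k ∧ (Q i).rank (some s) < (Q i).rank none :=
    fun i => IR_struct (hρ.1.2.1 i)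
  -- structure of d
  have dS1 : ∀ i, ρ i = none → d i = none ∨
      ∃ s, d i = some s ∧ t s = k + 1 ∧ (Q i).rank (some s) < (Q i).rank none := by
    intro i h
    have h2 := hd.1.2.1 i
    rw [hR'1 i h] at h2
    exact IR_struct h2
  have dS2 : ∀ i, ρ i ≠ none → d i = none := by
    intro i h
    have h2 := hd.1.2.1 i
    rw [hR'2 i h] at h2
    rcases IR_struct h2 with h3 | ⟨s, _, hf, _⟩
    · exact h3
    · exact hf.elim
  -- structure of σ
  have σS : ∀ i, σ i = none ∨
      ∃ s, σ i = some s ∧ t s ≤ k + 1 ∧ (Q i).rank (some s) < (Q i).rank none := by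
    intro i
    rcases ρS i with h | ⟨s, h, h1, h2⟩
    · rw [hσ2 i h]
      rcases dS1 i h with h3 | ⟨s, h3, h4, h5⟩
      · exact Or.inl h3
      · exact Or.inr ⟨s, h3, by omega, h5⟩
    · exact Or.inr ⟨s, hσ1 i s h, by omega, h2⟩
  -- assigned sets of σ
  have aρ : ∀ s, t s ≤ k → assigned σ s = assigned ρ s := by
    intro s hs
    ext j
    simp only [assigned, Finset.mem_filter, Finset.mem_univ, true_and]
    constructor
    · intro h
      rcases ρS j with hj | ⟨s', hj, h1, _⟩
      · rw [hσ2 j hj] at h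
        rcases dS1 j hj with h3 | ⟨s'', h3, h4, _⟩
        · rw [h] at h3; exact absurd h3 (by simp)
        · rw [h] at h3
          obtain rfl : s = s'' := by injection h3
          omega
      · rw [hσ1 j s' hj] at h
        obtain rfl : s' = s := by injection h
        exact hj
    · intro h; exact hσ1 j s h
  have ad : ∀ s, t s = k + 1 → assigned σ s = assigned d s := by
    intro s hs
    ext j
    simp only [assigned, Finset.mem_filter, Finset.mem_univ, true_and]
    constructor
    · intro h
      rcases ρS j with hj | ⟨s', hj, h1, _⟩
      · rwa [hσ2 j hj] at h
      · rw [hσ1 j s' hj] at h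
        obtain rfl : s' = s := by injection h
        omega
    · intro h
      by_cases hj : ρ j = none
      · rwa [hσ2 j hj]
      · rw [dS2 j hj] at h; exact absurd h (by simp)
  have aE : ∀ s, ¬ (t s ≤ k + 1) → assigned σ s = ∅ := by
    intro s hs
    ext j
    simp only [assigned, Finset.mem_filter, Finset.mem_univ, true_and,
      Finset.notMem_empty, iff_false]
    intro h
    rcases σS j with hj | ⟨s', hj, h1, _⟩
    · rw [h] at hj; exact absurd hj (by simp)
    · rw [h] at hj
      obtain rfl : s = s' := by injection hj
      omega
  -- stability of σ
  have hσstable : Stable E (fun i => trunc (fun s => t s ≤ k + 1) (Q i)) σ := by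
    refine ⟨?_, ?_, ?_⟩
    · intro s
      by_cases h1 : t s ≤ k
      · rw [aρ s h1]; exact hρ.1.1 s
      · by_cases h2 : t s = k + 1
        · rw [ad s h2]; exact hd.1.1 s
        · rw [aE s (by omega)]; simp
    · intro i
      rcases σS i with h | ⟨s, h, h1, h2⟩
      · rw [h]
      · rw [h, trunc_rank_pos (Q i) h1, trunc_rank_none]
        exact le_of_lt h2
    · rintro i s ⟨h1, h2⟩
      have hgx : (trunc (fun s => t s ≤ k + 1) (Q i)).rank (σ i) = (Q i).rank (σ i) := by
        apply trunc_rank_good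
        rcases σS i with h | ⟨s', h, hts, _⟩
        · exact Or.inl h
        · exact Or.inr ⟨s', h, hts⟩
      have hxle : (Q i).rank (σ i) ≤ (Q i).rank none := by
        rcases σS i with h | ⟨s', h, _, hlt⟩
        · rw [h]
        · rw [h]; exact le_of_lt hlt
      obtain ⟨hts, hpref⟩ := block_struct hgx hxle h1
      by_cases hk : t s ≤ k
      · apply hρ.1.2.2 i s
        constructor
        · have hgρ : (trunc (fun s => t s ≤ k) (Q i)).rank (ρ i) = (Q i).rank (ρ i) := by
            apply trunc_rank_good
            rcases ρS i with h | ⟨s₀, h, hts₀, _⟩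
            · exact Or.inl h
            · exact Or.inr ⟨s₀, h, hts₀⟩
          rw [trunc_rank_pos (Q i) hk, hgρ]
          rcases ρS i with h | ⟨s₀, h, hts₀, hlt₀⟩
          · rw [h]
            exact lt_of_lt_of_le hpref hxle
          · rw [h]
            rw [hσ1 i s₀ h] at hpref
            exact hpref
        · rcases h2 with h2 | ⟨j, hj, hij⟩
          · left; rwa [aρ s hk] at h2
          · right
            refine ⟨j, ?_, hij⟩
            have hm : j ∈ assigned σ s := Finset.mem_filter.2 ⟨Finset.mem_univ j, hj⟩
            rw [aρ s hk] at hm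
            exact (Finset.mem_filter.1 hm).2
      · have hk1 : t s = k + 1 := by omega
        rcases ρS i with hρi | ⟨s₀, hρi, hts₀, _⟩
        · apply hd.1.2.2 i s
          constructor
          · rw [hR'1 i hρi, trunc_rank_pos (Q i) hk1]
            have hgd : (trunc (fun s => t s = k + 1) (Q i)).rank (d i) = (Q i).rank (d i) := by
              apply trunc_rank_good
              rcases dS1 i hρi with h | ⟨s', h, hts', _⟩
              · exact Or.inl h
              · exact Or.inr ⟨s', h, hts'⟩
            rw [hgd, ← hσ2 i hρi]
            exact hpref
          · rcases h2 with h2 | ⟨j, hj, hij⟩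
            · left; rwa [ad s hk1] at h2
            · right
              refine ⟨j, ?_, hij⟩
              have hm : j ∈ assigned σ s := Finset.mem_filter.2 ⟨Finset.mem_univ j, hj⟩
              rw [ad s hk1] at hm
              exact (Finset.mem_filter.1 hm).2
        · rw [hσ1 i s₀ hρi] at hpref
          have := hA i s s₀ (le_of_lt hpref)
          omega
  refine ⟨hσstable, ?_⟩
  -- optimality
  intro ν hν
  have νS : ∀ i, ν i = none ∨
      ∃ s, ν i = some s ∧ t s ≤ k + 1 ∧ (Q i).rank (some s) < (Q i).rank none :=
    fun i => IR_struct (hν.2.1 i)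
  set νk : Matching I S := fun i =>
    match ν i with
    | none => none
    | some s => if t s ≤ k then some s else none with hνkdef
  have hνk1 : ∀ i, ν i = none → νk i = none := by
    intro i h; simp only [hνkdef, h]
  have hνk2 : ∀ i s, ν i = some s → t s ≤ k → νk i = some s := by
    intro i s h h2; simp only [hνkdef, h]; rw [if_pos h2]
  have hνk3 : ∀ i s, ν i = some s → ¬ t s ≤ k → νk i = none := by
    intro i s h h2; simp only [hνkdef, h]; rw [if_neg h2]
  have hνkinv : ∀ j s, νk j = some s → ν j = some s ∧ t s ≤ k := by
    intro j s h
    rcases hj : ν j with _ | s'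
    · rw [hνk1 j hj] at h; exact absurd h (by simp)
    · by_cases h2 : t s' ≤ k
      · rw [hνk2 j s' hj h2] at h
        obtain rfl : s' = s := by injection h
        exact ⟨rfl, h2⟩
      · rw [hνk3 j s' hj h2] at h; exact absurd h (by simp)
  have νkS : ∀ i, νk i = none ∨
      ∃ s, νk i = some s ∧ t s ≤ k ∧ (Q i).rank (some s) < (Q i).rank none := by
    intro i
    rcases hn : νk i with _ | s
    · exact Or.inl rfl
    · obtain ⟨hνi, hts⟩ := hνkinv i s hn
      rcases νS i with h | ⟨s', h, _, hlt⟩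
      · rw [h] at hνi; exact absurd hνi (by simp)
      · rw [h] at hνi
        obtain rfl : s' = s := by injection hνi
        exact Or.inr ⟨_, rfl, hts, hlt⟩
  have ak1 : ∀ s, t s ≤ k → assigned νk s = assigned ν s := by
    intro s hs
    ext j
    simp only [assigned, Finset.mem_filter, Finset.mem_univ, true_and]
    exact ⟨fun h => (hνkinv j s h).1, fun h => hνk2 j s h hs⟩
  have ak2 : ∀ s, ¬ t s ≤ k → assigned νk s = ∅ := by
    intro s hs
    ext j
    simp only [assigned, Finset.mem_filter, Finset.mem_univ, true_and,
      Finset.notMem_empty, iff_false]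
    intro h
    exact hs (hνkinv j s h).2
  have hgνk : ∀ i, (trunc (fun s => t s ≤ k) (Q i)).rank (νk i) = (Q i).rank (νk i) := by
    intro i
    apply trunc_rank_good
    rcases νkS i with h | ⟨s, h, hts, _⟩
    · exact Or.inl h
    · exact Or.inr ⟨s, h, hts⟩
  have hgν : ∀ i, (trunc (fun s => t s ≤ k + 1) (Q i)).rank (ν i) = (Q i).rank (ν i) := by
    intro i
    apply trunc_rank_good
    rcases νS i with h | ⟨s, h, hts, _⟩
    · exact Or.inl h
    · exact Or.inr ⟨s, h, hts⟩
  have hgρ : ∀ i, (trunc (fun s => t s ≤ k) (Q i)).rank (ρ i) = (Q i).rank (ρ i) := by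
    intro i
    apply trunc_rank_good
    rcases ρS i with h | ⟨s, h, hts, _⟩
    · exact Or.inl h
    · exact Or.inr ⟨s, h, hts⟩
  -- νk is stable with respect to the tier-≤-k truncation
  have hνkstable : Stable E (fun i => trunc (fun s => t s ≤ k) (Q i)) νk := by
    refine ⟨?_, ?_, ?_⟩
    · intro s
      by_cases h1 : t s ≤ k
      · rw [ak1 s h1]; exact hν.1 s
      · rw [ak2 s h1]; simp
    · intro i
      rcases νkS i with h | ⟨s, h, hts, hlt⟩
      · rw [h]
      · rw [h, trunc_rank_pos (Q i) hts, trunc_rank_none]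
        exact le_of_lt hlt
    · rintro i s ⟨h1, h2⟩
      have hxle : (Q i).rank (νk i) ≤ (Q i).rank none := by
        rcases νkS i with h | ⟨s', h, _, hlt⟩
        · rw [h]
        · rw [h]; exact le_of_lt hlt
      obtain ⟨hts, hpref⟩ := block_struct (hgνk i) hxle h1
      apply hν.2.2 i s
      constructor
      · rw [trunc_rank_pos (Q i) (show t s ≤ k + 1 by omega), hgν i]
        rcases νS i with h | ⟨s'', h, hts'', hlt''⟩
        · rw [hνk1 i h] at hpref; rw [h]; exact hpref
        · by_cases h2' : t s'' ≤ k
          · rw [hνk2 i s'' h h2'] at hpref; rw [h]; exact hpref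
          · rw [hνk3 i s'' h h2'] at hpref
            rw [h]
            by_contra hle
            push_neg at hle
            have := hA i s'' s hle
            omega
      · rcases h2 with h2 | ⟨j, hj, hij⟩
        · left; rwa [ak1 s hts] at h2
        · right; exact ⟨j, (hνkinv j s hj).1, hij⟩
  have star : ∀ i, (Q i).rank (ρ i) ≤ (Q i).rank (νk i) := by
    intro i
    have h := hρ.2 νk hνkstable i
    rwa [hgρ i, hgνk i] at h
  -- no school loses students when passing from ρ to νk
  have h2c : ∀ s, (assigned ρ s).card ≤ (assigned νk s).card := by
    intro s
    by_contra hlt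
    push_neg at hlt
    obtain ⟨i, hiρ, hiν⟩ : ∃ i ∈ assigned ρ s, i ∉ assigned νk s := by
      by_contra hall
      push_neg at hall
      exact absurd (Finset.card_le_card (fun x hx => hall x hx)) (not_le.2 hlt)
    have hρi : ρ i = some s := (Finset.mem_filter.1 hiρ).2
    have hts : t s ≤ k := by
      rcases ρS i with h | ⟨s', h, hts, _⟩
      · rw [h] at hρi; exact absurd hρi (by simp)
      · rw [h] at hρi
        obtain rfl : s' = s := by injection hρi
        omega
    have hνki : νk i ≠ some s := fun h => hiν (Finset.mem_filter.2 ⟨Finset.mem_univ i, h⟩)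
    have hstrict : (Q i).rank (some s) < (Q i).rank (νk i) := by
      have hst := star i
      rw [hρi] at hst
      exact lt_of_le_of_ne hst (fun h => hνki ((Q i).inj h).symm)
    apply hνkstable.2.2 i s
    refine ⟨?_, Or.inl ?_⟩
    · rw [trunc_rank_pos (Q i) hts, hgνk i]
      exact hstrict
    · exact lt_of_lt_of_le hlt (hρ.1.1 s)
  -- the lone wolf theorem: the same students are matched in ρ and νk
  have lone : ∀ i, ρ i ≠ none → νk i ≠ none := by
    intro i h
    have hMsub : Finset.univ.filter (fun i => νk i ≠ none)
        ⊆ Finset.univ.filter (fun i => ρ i ≠ none) := by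
      intro j hj
      simp only [Finset.mem_filter, Finset.mem_univ, true_and] at *
      intro hρj
      apply hj
      rcases νkS j with h' | ⟨s, h', hts, hlt⟩
      · exact h'
      · exfalso
        have hst := star j
        rw [hρj, h'] at hst
        exact absurd hst (not_le.2 hlt)
    have hMeq : Finset.univ.filter (fun i => ρ i ≠ none)
        = Finset.univ.filter (fun i => νk i ≠ none) := by
      apply (Finset.eq_of_subset_of_card_le hMsub ?_).symm
      rw [card_matched, card_matched]
      exact Finset.sum_le_sum (fun s _ => h2c s)
    have : i ∈ Finset.univ.filter (fun i => νk i ≠ none) := by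
      rw [← hMeq]
      exact Finset.mem_filter.2 ⟨Finset.mem_univ i, h⟩
    exact (Finset.mem_filter.1 this).2
  have ν_matched : ∀ i, ρ i ≠ none → ∃ s, ν i = some s ∧ t s ≤ k := by
    intro i h
    have h1 := lone i h
    rcases hn : νk i with _ | s
    · exact absurd hn h1
    · obtain ⟨hνi, hts⟩ := hνkinv i s hn
      exact ⟨s, hνi, hts⟩
  have ν_unmatched : ∀ i, ρ i = none → ν i = none ∨
      ∃ s, ν i = some s ∧ t s = k + 1 ∧ (Q i).rank (some s) < (Q i).rank none := by
    intro i h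
    rcases νS i with h1 | ⟨s, h1, hts, hlt⟩
    · exact Or.inl h1
    · right
      refine ⟨s, h1, ?_, hlt⟩
      by_contra hne
      have hts' : t s ≤ k := by omega
      have hst := star i
      rw [h, hνk2 i s h1 hts'] at hst
      exact absurd hst (not_le.2 hlt)
  -- the matching ν viewed inside the stage-(k+1) market
  set ν' : Matching I S := fun i => if ρ i = none then ν i else none with hν'def
  have hν'1 : ∀ i, ρ i = none → ν' i = ν i := by
    intro i h; simp only [hν'def, if_pos h]
  have hν'2 : ∀ i, ρ i ≠ none → ν' i = none := by
    intro i h; simp only [hν'def, if_neg h]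
  have hgν' : ∀ i, ρ i = none →
      (trunc (fun s => t s = k + 1) (Q i)).rank (ν i) = (Q i).rank (ν i) := by
    intro i h
    apply trunc_rank_good
    rcases ν_unmatched i h with h1 | ⟨s, h1, hts, _⟩
    · exact Or.inl h1
    · exact Or.inr ⟨s, h1, hts⟩
  have aν'1 : ∀ s, t s = k + 1 → assigned ν' s = assigned ν s := by
    intro s hs
    ext j
    simp only [assigned, Finset.mem_filter, Finset.mem_univ, true_and]
    constructor
    · intro h
      by_cases hj : ρ j = none
      · rwa [hν'1 j hj] at h
      · rw [hν'2 j hj] at h; exact absurd h (by simp)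
    · intro h
      by_cases hj : ρ j = none
      · rwa [hν'1 j hj]
      · exfalso
        obtain ⟨s', h', hts'⟩ := ν_matched j hj
        rw [h] at h'
        obtain rfl : s = s' := by injection h'
        omega
  have aν'2 : ∀ s, t s ≠ k + 1 → assigned ν' s = ∅ := by
    intro s hs
    ext j
    simp only [assigned, Finset.mem_filter, Finset.mem_univ, true_and,
      Finset.notMem_empty, iff_false]
    intro h
    by_cases hj : ρ j = none
    · rw [hν'1 j hj] at h
      rcases ν_unmatched j hj with h1 | ⟨s', h1, hts', _⟩
      · rw [h] at h1; exact absurd h1 (by simp)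
      · rw [h] at h1
        obtain rfl : s = s' := by injection h1
        omega
    · rw [hν'2 j hj] at h; exact absurd h (by simp)
  have hν'stable : Stable E R' ν' := by
    refine ⟨?_, ?_, ?_⟩
    · intro s
      by_cases hs : t s = k + 1
      · rw [aν'1 s hs]; exact hν.1 s
      · rw [aν'2 s hs]; simp
    · intro i
      by_cases hi : ρ i = none
      · rw [hR'1 i hi, hν'1 i hi]
        rcases ν_unmatched i hi with h | ⟨s, h, hts, hlt⟩
        · rw [h]
        · rw [h, trunc_rank_pos (Q i) hts, trunc_rank_none]
          exact le_of_lt hlt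
      · rw [hR'2 i hi, hν'2 i hi]
    · rintro i s ⟨h1, h2⟩
      by_cases hi : ρ i = none
      · rw [hR'1 i hi, hν'1 i hi] at h1
        have hxle : (Q i).rank (ν i) ≤ (Q i).rank none := by
          rcases νS i with h | ⟨s', h, _, hlt⟩
          · rw [h]
          · rw [h]; exact le_of_lt hlt
        obtain ⟨hts, hpref⟩ := block_struct (hgν' i hi) hxle h1
        apply hν.2.2 i s
        constructor
        · rw [trunc_rank_pos (Q i) (show t s ≤ k + 1 by omega), hgν i]
          exact hpref
        · rcases h2 with h2 | ⟨j, hj, hij⟩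
          · left; rwa [aν'1 s hts] at h2
          · right
            refine ⟨j, ?_, hij⟩
            have hm : j ∈ assigned ν' s := Finset.mem_filter.2 ⟨Finset.mem_univ j, hj⟩
            rw [aν'1 s hts] at hm
            exact (Finset.mem_filter.1 hm).2
      · rw [hR'2 i hi, hν'2 i hi, trunc_rank_none,
          trunc_rank_neg (Q i) (not_false : ¬ False)] at h1
        have := rank_lt_bnd (Q i) none
        omega
  have opt_d := hd.2 ν' hν'stable
  intro i
  by_cases hi : ρ i = none
  · have h := opt_d i
    rw [hR'1 i hi, hν'1 i hi] at h
    have hg1 : (trunc (fun s => t s = k + 1) (Q i)).rank (d i) = (Q i).rank (d i) := by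
      apply trunc_rank_good
      rcases dS1 i hi with h' | ⟨s, h', hts, _⟩
      · exact Or.inl h'
      · exact Or.inr ⟨s, h', hts⟩
    rw [hg1, hgν' i hi] at h
    have hg2 : (trunc (fun s => t s ≤ k + 1) (Q i)).rank (d i) = (Q i).rank (d i) := by
      apply trunc_rank_good
      rcases dS1 i hi with h' | ⟨s, h', hts, _⟩
      · exact Or.inl h'
      · exact Or.inr ⟨s, h', by omega⟩
    rw [hσ2 i hi, hg2, hgν i]
    exact h
  · obtain ⟨s₀, hρi, hts₀, hlt₀⟩ : ∃ s₀, ρ i = some s₀ ∧ t s₀ ≤ k ∧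
        (Q i).rank (some s₀) < (Q i).rank none := by
      rcases ρS i with h | h
      · exact absurd h hi
      · exact h
    obtain ⟨s₁, hνi, hts₁⟩ := ν_matched i hi
    have hνki : νk i = some s₁ := hνk2 i s₁ hνi hts₁
    have hst := star i
    rw [hρi, hνki] at hst
    rw [hσ1 i s₀ hρi, hνi, trunc_rank_pos (Q i) (show t s₀ ≤ k + 1 by omega),
      trunc_rank_pos (Q i) (show t s₁ ≤ k + 1 by omega)]
    exact hst
end Step

/-- Running DA in stages tier by tier (only students unmatched so far
propose, only to the current tier's schools) on tier-aligned preferences produces exactly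
the matching of the standard student-proposing DA on the full preferences. -/
theorem staged_DA_eq_DA_on_aligned
    (E : Prio I S) (t : S → ℕ) (T : ℕ) (ht : IsTierStructure t T)
    (Q : I → Pref S) (hA : ∀ i, AlignedPref t (Q i)) :
    TDA E t Q = DA E Q := by
  have key : ∀ k, StudentOptimal E (fun i => trunc (fun s => t s ≤ k) (Q i)) (TDAaux E t Q k) := by
    intro k
    induction k with
    | zero => exact base_SO E t Q (fun s => (ht.1 s).1)
    | succ k ih => exact step_SO E t Q hA k (TDAaux E t Q k) ih
  have hT := key (Finset.univ.sup t)
  have hQ : StudentOptimal E Q (TDA E t Q) := by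
    refine SO_of_rank_eq E (fun i x => ?_) hT
    rcases x with _ | s
    · exact trunc_rank_none _ _
    · exact trunc_rank_pos (Q i) (Finset.le_sup (Finset.mem_univ s))
  exact (DA_eq_of_SO E Q hQ).symm

end SchoolChoice
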